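/- Let n ≥ 3 and let SF_n be the sunflower graph obtained from the wheel graph W_{n+1} by replacing each rim edge by a triangle, so that two of these triangles share a vertex if and only if the corresponding rim edges are adjacent. Then the chromatic compound curling number of SF_n equals (n+1)n²/4 if n is even and (n+1)(n−1)²/4 if n is odd. -/

import Mathlib

open SimpleGraph Finset

/-- A proper vertex colouring of `G` with colour set `Fin k`. -/
def IsProperColoring {V : Type*} (G : SimpleGraph V) {k : ℕ} (C : V → Fin k) : Prop :=
  ∀ ⦃v w⦄, G.Adj v w → C v ≠ C w

/-- The chromatic number of `G`, as a natural number. -/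
noncomputable def chi {V : Type*} (G : SimpleGraph V) : ℕ :=
  G.chromaticNumber.toNat

/-- θ(cᵢ): the number of vertices receiving colour `i` under the colouring `C`. -/
def theta {V : Type*} [Fintype V] {k : ℕ} (C : V → Fin k) (i : Fin k) : ℕ :=
  (Finset.univ.filter fun v => C v = i).card

/-- The list of colour class sizes of `C`, sorted in descending order. -/
def classSizesDesc {V : Type*} [Fintype V] {k : ℕ} (C : V → Fin k) : List ℕ :=
  (List.insertionSort (· ≤ ·) (List.ofFn fun i => theta C i)).reverse

/-- A χ⁻-colouring of `G`: a proper colouring with exactly χ(G) colours such that,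
greedily, the colour class of `c₁` is as large as possible, then the colour class of
`c₂` is as large as possible among the remaining vertices, and so on; equivalently,
the descending sequence of colour class sizes is lexicographically maximal among
all proper colourings with χ(G) colours. -/
def IsChiMinusColoring {V : Type*} [Fintype V] (G : SimpleGraph V)
    (C : V → Fin (chi G)) : Prop :=
  IsProperColoring G C ∧
    ∀ C' : V → Fin (chi G), IsProperColoring G C' →
      ¬ List.Lex (· < ·) (classSizesDesc C) (classSizesDesc C')

/-- The sunflower graph `SFₙ`: the wheel graph `W_{n+1}` (rim vertices
`some (v, false)`, central vertex `none`) together with, for each rim edge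
`{vᵢ, vᵢ₊₁}`, a new outer vertex `some (v, true)` adjacent to both of its endpoints
(replacing each rim edge by a triangle). -/
def sunflowerG (n : ℕ) : SimpleGraph (Option (Fin n × Bool)) :=
  SimpleGraph.fromRel (fun a b =>
    match a, b with
    | some (v, false), some (w, false) => w.val = (v.val + 1) % n
    | some (v, true), some (w, false) => w = v ∨ w.val = (v.val + 1) % n
    | none, some (_, false) => True
    | _, _ => False)

-- indicator sums
lemma sum_even_ind (n : ℕ) : (∑ i ∈ Finset.range n, if i % 2 = 0 then 1 else 0) = (n+1)/2 := by
  induction n with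
  | zero => simp
  | succ m ih => rw [Finset.sum_range_succ, ih]; split <;> omega

lemma sum_odd_ind (n : ℕ) : (∑ i ∈ Finset.range n, if i % 2 = 0 then 0 else 1) = n/2 := by
  induction n with
  | zero => simp
  | succ m ih => rw [Finset.sum_range_succ, ih]; split <;> omega

-- parity lemma for odd cycles
lemma oddcycle {n : ℕ} (h3 : 3 ≤ n) (hodd : n % 2 = 1) (b : Fin n → Bool)
    (hb : ∀ k : Fin n, b ⟨(k.val+1) % n, Nat.mod_lt _ (by omega)⟩ ≠ b k) : False := by
  have key : ∀ k : ℕ, (hk : k < n) → b ⟨k, hk⟩ = (decide (k % 2 = 1)).xor (b ⟨0, by omega⟩) := by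
    intro k
    induction k with
    | zero => intro hk; simp
    | succ m ih =>
      intro hk
      have hm := ih (by omega)
      have h1 := hb ⟨m, by omega⟩
      have e : (m+1) % n = m+1 := Nat.mod_eq_of_lt hk
      simp only [e] at h1
      have h2 : b ⟨m+1, hk⟩ = !(b ⟨m, by omega⟩) := by
        revert h1; cases b ⟨m+1, hk⟩ <;> cases b ⟨m, by omega⟩ <;> simp
      rw [h2, hm]
      rcases Nat.mod_two_eq_zero_or_one m with h | h <;>
        · have : (m+1) % 2 = 1 - m % 2 := by omega
          simp [this, h, Bool.xor]
  have h1 := hb ⟨n-1, by omega⟩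
  have e : (n-1+1) % n = 0 := by
    have : n - 1 + 1 = n := by omega
    simp [this]
  simp only [e] at h1
  have k1 := key (n-1) (by omega)
  have k0 := key 0 (by omega)
  have : (n-1) % 2 = 0 := by omega
  simp [this] at k1
  simp at k0
  rw [k1] at h1
  exact h1 rfl

-- independence bound in the cycle
lemma cycle_ind {n : ℕ} (h2 : 2 ≤ n) (S : Finset (Fin n))
    (hS : ∀ k : Fin n, k ∈ S → (⟨(k.val+1) % n, Nat.mod_lt _ (by omega)⟩ : Fin n) ∉ S) :
    2 * S.card ≤ n := by
  classical
  have hmaps : ∀ k ∈ S, (⟨(k.val+1) % n, Nat.mod_lt _ (by omega)⟩ : Fin n) ∈ Sᶜ := by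
    intro k hk; simpa using hS k hk
  have hinj : Set.InjOn (fun k : Fin n => (⟨(k.val+1) % n, Nat.mod_lt _ (by omega)⟩ : Fin n)) S := by
    intro a _ b _ hab
    simp only [Fin.mk.injEq] at hab
    have ha := a.isLt; have hb := b.isLt
    have : a.val = b.val := by
      rcases Nat.lt_or_ge (a.val+1) n with h | h <;> rcases Nat.lt_or_ge (b.val+1) n with h' | h'
      · rw [Nat.mod_eq_of_lt h, Nat.mod_eq_of_lt h'] at hab; omega
      · rw [Nat.mod_eq_of_lt h] at hab
        have : b.val + 1 = n := by omega
        rw [this, Nat.mod_self] at hab; omega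
      · rw [Nat.mod_eq_of_lt h'] at hab
        have : a.val + 1 = n := by omega
        rw [this, Nat.mod_self] at hab; omega
      · omega
    exact Fin.ext this
  have := Finset.card_le_card_of_injOn _ hmaps hinj
  have hcompl : Sᶜ.card = n - S.card := by
    rw [Finset.card_compl]; simp
  have : S.card ≤ n - S.card := by omega
  have hle : S.card ≤ n := by simpa using Finset.card_le_univ S
  omega

lemma theta_decomp {n k : ℕ} (C : Option (Fin n × Bool) → Fin k) (i : Fin k) :
    theta C i = (if C none = i then 1 else 0)
      + (∑ v : Fin n, ((if C (some (v, false)) = i then 1 else 0)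
          + (if C (some (v, true)) = i then 1 else 0))) := by
  rw [theta, Finset.card_filter, Fintype.sum_option, Fintype.sum_prod_type]
  congr 1
  refine Finset.sum_congr rfl fun v _ => ?_
  rw [Fintype.sum_bool, add_comm]

lemma sum_theta {V : Type*} [Fintype V] [DecidableEq V] {k : ℕ} (C : V → Fin k) :
    ∑ i, theta C i = Fintype.card V := by
  classical
  rw [← Finset.card_univ]
  rw [Finset.card_eq_sum_card_fiberwise (f := C) (t := Finset.univ) (fun x _ => Finset.mem_univ _)]
  rfl

lemma classSizesDesc_perm {V : Type*} [Fintype V] {k : ℕ} (C : V → Fin k) :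
    (classSizesDesc C).Perm (List.ofFn (fun i => theta C i)) :=
  (List.reverse_perm _).trans (List.perm_insertionSort _ _)

lemma classSizesDesc_length {V : Type*} [Fintype V] {k : ℕ} (C : V → Fin k) :
    (classSizesDesc C).length = k := by
  rw [(classSizesDesc_perm C).length_eq, List.length_ofFn]

lemma classSizesDesc_sum {V : Type*} [Fintype V] [DecidableEq V] {k : ℕ} (C : V → Fin k) :
    (classSizesDesc C).sum = Fintype.card V := by
  rw [(classSizesDesc_perm C).sum_eq, List.sum_ofFn, sum_theta]

lemma classSizesDesc_prod {V : Type*} [Fintype V] {k : ℕ} (C : V → Fin k) :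
    (classSizesDesc C).prod = ∏ i, theta C i := by
  rw [(classSizesDesc_perm C).prod_eq, List.prod_ofFn]

lemma classSizesDesc_mem {V : Type*} [Fintype V] {k : ℕ} (C : V → Fin k) {a : ℕ}
    (ha : a ∈ classSizesDesc C) : ∃ i, theta C i = a := by
  have := (classSizesDesc_perm C).mem_iff.mp ha
  rwa [List.mem_ofFn] at this

lemma classSizesDesc_eq_of_perm {V : Type*} [Fintype V] {k : ℕ} (C : V → Fin k) (L : List ℕ)
    (hperm : (List.ofFn (fun i => theta C i)).Perm L)
    (hsorted : L.Pairwise (fun a b => b ≤ a)) : classSizesDesc C = L := by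
  have : IsAntisymm ℕ (fun a b => b ≤ a) := ⟨fun a b h1 h2 => le_antisymm h2 h1⟩
  refine List.Perm.eq_of_pairwise (fun a b _ _ h1 h2 => le_antisymm h2 h1) ?_ hsorted ((classSizesDesc_perm C).trans hperm)
  rw [classSizesDesc]
  exact List.pairwise_reverse.mpr (by simpa using List.pairwise_insertionSort (· ≤ ·) _)

lemma mod_succ_ne {n a : ℕ} (h2 : 2 ≤ n) (ha : a < n) : (a+1) % n ≠ a := by
  rcases Nat.lt_or_ge (a+1) n with h | h
  · rw [Nat.mod_eq_of_lt h]; omega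
  · have : a + 1 = n := by omega
    rw [this, Nat.mod_self]; omega

def nxt {n : ℕ} [NeZero n] (v : Fin n) : Fin n := ⟨(v.val + 1) % n, Nat.mod_lt _ (Nat.pos_of_ne_zero (NeZero.ne n))⟩

section
variable {n : ℕ} (hn : 3 ≤ n)

lemma adj_center_rim (v : Fin n) : (sunflowerG n).Adj none (some (v, false)) := by
  rw [sunflowerG, SimpleGraph.fromRel_adj]
  exact ⟨by simp, Or.inl trivial⟩

lemma adj_out_rim_same (v : Fin n) : (sunflowerG n).Adj (some (v, true)) (some (v, false)) := by
  rw [sunflowerG, SimpleGraph.fromRel_adj]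
  exact ⟨by simp, Or.inl (Or.inl rfl)⟩

include hn

lemma adj_out_rim_nxt (v : Fin n) :
    haveI : NeZero n := ⟨by omega⟩
    (sunflowerG n).Adj (some (v, true)) (some (nxt v, false)) := by
  rw [sunflowerG, SimpleGraph.fromRel_adj]
  exact ⟨by simp, Or.inl (Or.inr rfl)⟩

lemma adj_rim_rim (v : Fin n) :
    haveI : NeZero n := ⟨by omega⟩
    (sunflowerG n).Adj (some (v, false)) (some (nxt v, false)) := by
  haveI : NeZero n := ⟨by omega⟩
  rw [sunflowerG, SimpleGraph.fromRel_adj]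
  refine ⟨fun h => ?_, Or.inl rfl⟩
  simp only [Option.some.injEq, Prod.mk.injEq, and_true] at h
  have hv := congrArg Fin.val h
  simp only [nxt] at hv
  exact mod_succ_ne (show 2 ≤ n by omega) v.isLt hv.symm

lemma isProper_iff {k : ℕ} (C : Option (Fin n × Bool) → Fin k) :
    haveI : NeZero n := ⟨by omega⟩
    (IsProperColoring (sunflowerG n) C ↔
      ((∀ v : Fin n, C none ≠ C (some (v, false))) ∧
       (∀ v : Fin n, C (some (v, false)) ≠ C (some (nxt v, false))) ∧
       (∀ v : Fin n, C (some (v, true)) ≠ C (some (v, false))) ∧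
       (∀ v : Fin n, C (some (v, true)) ≠ C (some (nxt v, false))))) := by
  haveI : NeZero n := ⟨by omega⟩
  constructor
  · intro h
    exact ⟨fun v => h (adj_center_rim v), fun v => h (adj_rim_rim hn v),
      fun v => h (adj_out_rim_same v), fun v => h (adj_out_rim_nxt hn v)⟩
  · rintro ⟨h1, h2, h3, h4⟩ a b hadj
    rw [sunflowerG, SimpleGraph.fromRel_adj] at hadj
    obtain ⟨hne, hrel⟩ := hadj
    rcases a with _ | ⟨v, _ | _⟩ <;> rcases b with _ | ⟨w, _ | _⟩
    · exact absurd rfl hne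
    · rcases hrel with h | h
      · exact h1 w
      · exact absurd h not_false
    · rcases hrel with h | h <;> exact absurd h not_false
    · rcases hrel with h | h
      · exact absurd h not_false
      · exact (h1 v).symm
    · rcases hrel with h | h
      · rw [show w = nxt v from Fin.ext h]
        exact h2 v
      · rw [show v = nxt w from Fin.ext h]
        exact (h2 w).symm
    · rcases hrel with h | h
      · exact absurd h not_false
      · rcases h with h | h
        · rw [h]
          exact (h3 w).symm
        · rw [show v = nxt w from Fin.ext h]
          exact (h4 w).symm
    · rcases hrel with h | h <;> exact absurd h not_false
    · rcases hrel with h | h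
      · rcases h with h | h
        · rw [h]
          exact h3 v
        · rw [show w = nxt v from Fin.ext h]
          exact h4 v
      · exact absurd h not_false
    · rcases hrel with h | h <;> exact absurd h not_false

end

lemma theta_parts {n k : ℕ} (C : Option (Fin n × Bool) → Fin k) (i : Fin k) :
    theta C i = (if C none = i then 1 else 0)
      + ((Finset.univ.filter fun v : Fin n => C (some (v, false)) = i).card
      + (Finset.univ.filter fun v : Fin n => C (some (v, true)) = i).card) := by
  rw [theta_decomp, Finset.sum_add_distrib, Finset.card_filter, Finset.card_filter]

lemma rim_out_card {n k : ℕ} (hn : 3 ≤ n) {C : Option (Fin n × Bool) → Fin k}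
    (hC : IsProperColoring (sunflowerG n) C) (i : Fin k) :
    (Finset.univ.filter fun v : Fin n => C (some (v, false)) = i).card
      + (Finset.univ.filter fun v : Fin n => C (some (v, true)) = i).card ≤ n := by
  classical
  have hdisj : Disjoint (Finset.univ.filter fun v : Fin n => C (some (v, false)) = i)
      (Finset.univ.filter fun v : Fin n => C (some (v, true)) = i) := by
    rw [Finset.disjoint_left]
    intro v hv1 hv2
    simp only [Finset.mem_filter] at hv1 hv2
    exact hC (adj_out_rim_same v) (hv2.2.trans hv1.2.symm)
  calc (Finset.univ.filter fun v : Fin n => C (some (v, false)) = i).card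
      + (Finset.univ.filter fun v : Fin n => C (some (v, true)) = i).card
      = ((Finset.univ.filter fun v : Fin n => C (some (v, false)) = i)
        ∪ (Finset.univ.filter fun v : Fin n => C (some (v, true)) = i)).card :=
        (Finset.card_union_of_disjoint hdisj).symm
    _ ≤ (Finset.univ : Finset (Fin n)).card := Finset.card_le_univ _
    _ = n := by simp

lemma theta_le {n k : ℕ} (hn : 3 ≤ n) {C : Option (Fin n × Bool) → Fin k}
    (hC : IsProperColoring (sunflowerG n) C) (i : Fin k) : theta C i ≤ n + 1 := by
  classical
  rw [theta_parts]
  have h := rim_out_card hn hC i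
  split <;> omega

lemma theta_full {n k : ℕ} (hn : 3 ≤ n) {C : Option (Fin n × Bool) → Fin k}
    (hC : IsProperColoring (sunflowerG n) C) {i : Fin k} (hi : theta C i = n + 1) :
    C none = i ∧ (∀ v : Fin n, C (some (v, true)) = i) ∧ (∀ v : Fin n, C (some (v, false)) ≠ i) := by
  classical
  have hrc := rim_out_card hn hC i
  have hp := theta_parts C i
  -- if some rim vertex has colour i then the centre doesn't, giving theta ≤ n
  have hrim : (Finset.univ.filter fun v : Fin n => C (some (v, false)) = i) = ∅ := by
    by_contra h
    obtain ⟨v, hv⟩ := Finset.nonempty_of_ne_empty h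
    simp only [Finset.mem_filter] at hv
    have hcen : ¬ (C none = i) := fun hc => hC (adj_center_rim v) (hc.trans hv.2.symm)
    rw [if_neg hcen] at hp
    omega
  rw [hrim] at hp
  simp only [Finset.card_empty] at hp
  have hout : (Finset.univ.filter fun v : Fin n => C (some (v, true)) = i).card ≤ n := by
    have := Finset.card_le_univ (Finset.univ.filter fun v : Fin n => C (some (v, true)) = i)
    simpa using this
  have hcen : C none = i := by by_contra h; rw [if_neg h] at hp; omega
  rw [if_pos hcen] at hp
  have houteq : (Finset.univ.filter fun v : Fin n => C (some (v, true)) = i).card = n := by omega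
  have hfull : (Finset.univ.filter fun v : Fin n => C (some (v, true)) = i) = Finset.univ := by
    apply Finset.eq_univ_of_card
    simpa using houteq
  refine ⟨hcen, fun v => ?_, fun v hv => ?_⟩
  · have := Finset.eq_univ_iff_forall.mp hfull v
    simpa using this
  · have : v ∈ (Finset.univ.filter fun w : Fin n => C (some (w, false)) = i) := by
      simp [hv]
    rw [hrim] at this
    exact absurd this (Finset.notMem_empty v)

lemma theta_other {n k : ℕ} (hn : 3 ≤ n) {C : Option (Fin n × Bool) → Fin k}
    (hC : IsProperColoring (sunflowerG n) C) {i j : Fin k} (hi : theta C i = n + 1)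
    (hj : j ≠ i) : theta C j ≤ n / 2 := by
  classical
  haveI : NeZero n := ⟨by omega⟩
  obtain ⟨hcen, hout, _⟩ := theta_full hn hC hi
  have hp := theta_parts C j
  have hcenj : ¬ (C none = j) := fun h => hj (h.symm.trans hcen)
  rw [if_neg hcenj] at hp
  have houtj : (Finset.univ.filter fun v : Fin n => C (some (v, true)) = j) = ∅ := by
    rw [Finset.filter_eq_empty_iff]
    intro v _
    rw [hout v]
    exact fun h => hj h.symm
  rw [houtj] at hp
  simp only [Finset.card_empty] at hp
  -- rim class is independent in the cycle
  have hind := cycle_ind (show 2 ≤ n by omega)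
    (Finset.univ.filter fun v : Fin n => C (some (v, false)) = j) ?_
  · omega
  · intro v hv hv2
    simp only [Finset.mem_filter] at hv hv2
    exact hC (adj_rim_rim hn v) (hv.2.trans hv2.2.symm)

def evenCol (n : ℕ) : Option (Fin n × Bool) → Fin 3 := fun x =>
  match x with
  | none => 0
  | some (_, true) => 0
  | some (v, false) => if v.val % 2 = 0 then 1 else 2

lemma evenCol_proper {n : ℕ} (hn : 3 ≤ n) (he : n % 2 = 0) :
    IsProperColoring (sunflowerG n) (evenCol n) := by
  haveI : NeZero n := ⟨by omega⟩
  rw [isProper_iff hn]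
  have hpar : ∀ v : Fin n, v.val % 2 ≠ ((nxt v : Fin n)).val % 2 := by
    intro v
    have hlt := v.isLt
    show v.val % 2 ≠ ((v.val + 1) % n) % 2
    rcases Nat.lt_or_ge (v.val + 1) n with h | h
    · rw [Nat.mod_eq_of_lt h]; omega
    · have : v.val + 1 = n := by omega
      rw [this, Nat.mod_self]; omega
  refine ⟨fun v => ?_, fun v => ?_, fun v => ?_, fun v => ?_⟩
  · show (0 : Fin 3) ≠ _
    simp only [evenCol]
    split <;> decide
  · have := hpar v
    show (if v.val % 2 = 0 then (1 : Fin 3) else 2) ≠ (if (nxt v : Fin n).val % 2 = 0 then 1 else 2)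
    split_ifs with h1 h2 h2
    · omega
    · decide
    · decide
    · omega
  · show (0 : Fin 3) ≠ _
    simp only [evenCol]
    split <;> decide
  · show (0 : Fin 3) ≠ _
    simp only [evenCol]
    split <;> decide

def oddCol (n : ℕ) : Option (Fin n × Bool) → Fin 4 := fun x =>
  match x with
  | none => 0
  | some (_, true) => 0
  | some (v, false) => if v.val = n - 1 then 3 else if v.val % 2 = 0 then 1 else 2

lemma oddCol_proper {n : ℕ} (hn : 3 ≤ n) (ho : n % 2 = 1) :
    IsProperColoring (sunflowerG n) (oddCol n) := by
  haveI : NeZero n := ⟨by omega⟩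
  rw [isProper_iff hn]
  refine ⟨fun v => ?_, fun v => ?_, fun v => ?_, fun v => ?_⟩
  · show (0 : Fin 4) ≠ _
    simp only [oddCol]
    split_ifs <;> decide
  · show (if v.val = n - 1 then (3 : Fin 4) else if v.val % 2 = 0 then 1 else 2)
      ≠ (if (nxt v : Fin n).val = n - 1 then 3 else if (nxt v : Fin n).val % 2 = 0 then 1 else 2)
    have hlt := v.isLt
    have hnxt : (nxt v : Fin n).val = (v.val + 1) % n := rfl
    rcases Nat.lt_or_ge (v.val + 1) n with h | h
    · rw [hnxt, Nat.mod_eq_of_lt h] at *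
      split_ifs <;> first | decide | omega
    · have he : v.val + 1 = n := by omega
      have h0 : (nxt v : Fin n).val = 0 := by rw [hnxt, he, Nat.mod_self]
      rw [h0]
      have hv : v.val = n - 1 := by omega
      split_ifs <;> first | decide | omega
  · show (0 : Fin 4) ≠ _
    simp only [oddCol]
    split_ifs <;> decide
  · show (0 : Fin 4) ≠ _
    simp only [oddCol]
    split_ifs <;> decide

lemma not_colorable2 {n : ℕ} (hn : 3 ≤ n) : ¬ (sunflowerG n).Colorable 2 := by
  haveI : NeZero n := ⟨by omega⟩
  rintro ⟨C'⟩
  set r0 : Fin n := ⟨0, by omega⟩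
  have h1 := C'.valid (adj_rim_rim hn r0)
  have h2 := C'.valid (adj_out_rim_same r0)
  have h3 := C'.valid (adj_out_rim_nxt hn r0)
  rw [Fin.ne_iff_vne] at h1 h2 h3
  have b1 := (C' (some (r0, false))).isLt
  have b2 := (C' (some (nxt r0, false))).isLt
  have b3 := (C' (some (r0, true))).isLt
  omega

lemma not_colorable3 {n : ℕ} (hn : 3 ≤ n) (ho : n % 2 = 1) : ¬ (sunflowerG n).Colorable 3 := by
  haveI : NeZero n := ⟨by omega⟩
  rintro ⟨C'⟩
  set c : Fin 3 := C' none with hc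
  set fc : Fin 3 := if c = 0 then 1 else 0 with hfc
  apply oddcycle hn ho (fun k => decide (C' (some (k, false)) = fc))
  intro k
  have hpq := C'.valid (adj_rim_rim hn k)
  have hpc := C'.valid (adj_center_rim k)
  have hqc := C'.valid (adj_center_rim (nxt k))
  have hnxt : (⟨(k.val + 1) % n, Nat.mod_lt _ (by omega)⟩ : Fin n) = nxt k := rfl
  rw [hnxt]
  set p := C' (some (k, false))
  set q := C' (some (nxt k, false))
  by_cases hp : p = fc <;> by_cases hq : q = fc
  · exact absurd (hq.trans hp.symm) hpq.symm
  · simp [hp, hq]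
  · simp [hp, hq]
  · exfalso
    apply hpq
    have hfcv : fc.val = if c.val = 0 then 1 else 0 := by
      by_cases h : c = 0
      · have : c.val = 0 := by rw [h]; rfl
        simp [hfc, h, this]
      · have : c.val ≠ 0 := fun hv => h (Fin.ext hv)
        simp [hfc, h, this]
    rw [Fin.ne_iff_vne] at hpc hqc
    have hp' : p.val ≠ fc.val := fun h => hp (Fin.ext h)
    have hq' : q.val ≠ fc.val := fun h => hq (Fin.ext h)
    rw [hfcv] at hp' hq'
    apply Fin.ext
    have := p.isLt; have := q.isLt; have := c.isLt
    split_ifs at hp' hq' <;> omega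

lemma chi_even {n : ℕ} (hn : 3 ≤ n) (he : n % 2 = 0) : chi (sunflowerG n) = 3 := by
  have h1 : (sunflowerG n).chromaticNumber ≤ 3 :=
    (SimpleGraph.Colorable.chromaticNumber_le ⟨SimpleGraph.Coloring.mk (evenCol n)
      (fun {v w} h => evenCol_proper hn he h)⟩)
  have h2 : ¬ (sunflowerG n).chromaticNumber ≤ 2 := fun h =>
    not_colorable2 hn (SimpleGraph.chromaticNumber_le_iff_colorable.mp (by exact_mod_cast h))
  have h3 : (2 : ℕ∞) < (sunflowerG n).chromaticNumber := not_le.mp (by exact_mod_cast h2)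
  have h4 : (3 : ℕ∞) ≤ (sunflowerG n).chromaticNumber := Order.add_one_le_of_lt h3
  have : (sunflowerG n).chromaticNumber = (3 : ℕ∞) := le_antisymm (by exact_mod_cast h1) h4
  rw [chi, this]
  rfl

lemma chi_odd {n : ℕ} (hn : 3 ≤ n) (ho : n % 2 = 1) : chi (sunflowerG n) = 4 := by
  have h1 : (sunflowerG n).chromaticNumber ≤ 4 :=
    (SimpleGraph.Colorable.chromaticNumber_le ⟨SimpleGraph.Coloring.mk (oddCol n)
      (fun {v w} h => oddCol_proper hn ho h)⟩)
  have h2 : ¬ (sunflowerG n).chromaticNumber ≤ 3 := fun h =>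
    not_colorable3 hn ho (SimpleGraph.chromaticNumber_le_iff_colorable.mp (by exact_mod_cast h))
  have h3 : (3 : ℕ∞) < (sunflowerG n).chromaticNumber := not_le.mp (by exact_mod_cast h2)
  have h4 : (4 : ℕ∞) ≤ (sunflowerG n).chromaticNumber := Order.add_one_le_of_lt h3
  have : (sunflowerG n).chromaticNumber = (4 : ℕ∞) := le_antisymm (by exact_mod_cast h1) h4
  rw [chi, this]
  rfl

lemma theta_evenCol0 {n : ℕ} (hn : 3 ≤ n) : theta (evenCol n) 0 = n + 1 := by
  rw [theta_parts]
  have h1 : (Finset.univ.filter fun v : Fin n => evenCol n (some (v, false)) = 0) = ∅ := by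
    rw [Finset.filter_eq_empty_iff]
    intro v _
    show ¬ (if v.val % 2 = 0 then (1 : Fin 3) else 2) = 0
    split <;> decide
  have h2 : (Finset.univ.filter fun v : Fin n => evenCol n (some (v, true)) = 0) = Finset.univ := by
    rw [Finset.filter_eq_self]
    intro v _
    rfl
  rw [h1, h2]
  have h0 : evenCol n none = (0 : Fin 3) := rfl
  rw [h0, if_pos rfl]
  simp
  omega

lemma theta_evenCol1 {n : ℕ} (hn : 3 ≤ n) (he : n % 2 = 0) : theta (evenCol n) 1 = n / 2 := by
  rw [theta_parts]
  have h1 : (Finset.univ.filter fun v : Fin n => evenCol n (some (v, false)) = 1)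
      = (Finset.univ.filter fun v : Fin n => v.val % 2 = 0) := by
    apply Finset.filter_congr
    intro v _
    show (if v.val % 2 = 0 then (1 : Fin 3) else 2) = 1 ↔ _
    split <;> simp_all
  have h2 : (Finset.univ.filter fun v : Fin n => evenCol n (some (v, true)) = 1) = ∅ := by
    rw [Finset.filter_eq_empty_iff]
    intro v _
    show ¬ (0 : Fin 3) = 1
    decide
  rw [h1, h2]
  have h3 : (Finset.univ.filter fun v : Fin n => v.val % 2 = 0).card
      = ∑ i ∈ Finset.range n, if i % 2 = 0 then 1 else 0 := by
    rw [Finset.card_filter]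
    exact Fin.sum_univ_eq_sum_range (fun i => if i % 2 = 0 then 1 else 0) n
  rw [h3, sum_even_ind]
  have h0 : evenCol n none = (0 : Fin 3) := rfl
  rw [h0, if_neg (by decide : ¬ (0 : Fin 3) = 1)]
  simp
  omega

lemma theta_evenCol2 {n : ℕ} (hn : 3 ≤ n) : theta (evenCol n) 2 = n / 2 := by
  rw [theta_parts]
  have h1 : (Finset.univ.filter fun v : Fin n => evenCol n (some (v, false)) = 2)
      = (Finset.univ.filter fun v : Fin n => ¬ (v.val % 2 = 0)) := by
    apply Finset.filter_congr
    intro v _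
    show (if v.val % 2 = 0 then (1 : Fin 3) else 2) = 2 ↔ _
    split <;> simp_all
  have h2 : (Finset.univ.filter fun v : Fin n => evenCol n (some (v, true)) = 2) = ∅ := by
    rw [Finset.filter_eq_empty_iff]
    intro v _
    show ¬ (0 : Fin 3) = 2
    decide
  rw [h1, h2]
  have h3 : (Finset.univ.filter fun v : Fin n => ¬ (v.val % 2 = 0)).card
      = ∑ i ∈ Finset.range n, if i % 2 = 0 then 0 else 1 := by
    rw [Finset.card_filter]
    have := Fin.sum_univ_eq_sum_range (fun i => if i % 2 = 0 then 0 else 1) n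
    rw [← this]
    apply Finset.sum_congr rfl
    intro v _
    split <;> simp_all
  rw [h3, sum_odd_ind]
  have h0 : evenCol n none = (0 : Fin 3) := rfl
  rw [h0, if_neg (by decide : ¬ (0 : Fin 3) = 2)]
  simp

lemma theta_oddCol0 {n : ℕ} (hn : 3 ≤ n) : theta (oddCol n) 0 = n + 1 := by
  rw [theta_parts]
  have h1 : (Finset.univ.filter fun v : Fin n => oddCol n (some (v, false)) = 0) = ∅ := by
    rw [Finset.filter_eq_empty_iff]
    intro v _
    show ¬ (if v.val = n - 1 then (3 : Fin 4) else if v.val % 2 = 0 then 1 else 2) = 0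
    split_ifs <;> decide
  have h2 : (Finset.univ.filter fun v : Fin n => oddCol n (some (v, true)) = 0) = Finset.univ := by
    rw [Finset.filter_eq_self]
    intro v _
    rfl
  rw [h1, h2]
  have h0 : oddCol n none = (0 : Fin 4) := rfl
  rw [h0, if_pos rfl]
  simp
  omega

lemma theta_oddCol1 {n : ℕ} (hn : 3 ≤ n) (ho : n % 2 = 1) : theta (oddCol n) 1 = (n - 1) / 2 := by
  rw [theta_parts]
  have h1 : (Finset.univ.filter fun v : Fin n => oddCol n (some (v, false)) = 1)
      = (Finset.univ.filter fun v : Fin n => ¬ (v.val = n - 1) ∧ v.val % 2 = 0) := by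
    apply Finset.filter_congr
    intro v _
    show (if v.val = n - 1 then (3 : Fin 4) else if v.val % 2 = 0 then 1 else 2) = 1 ↔ _
    split_ifs <;> simp_all
  have h2 : (Finset.univ.filter fun v : Fin n => oddCol n (some (v, true)) = 1) = ∅ := by
    rw [Finset.filter_eq_empty_iff]
    intro v _
    show ¬ (0 : Fin 4) = 1
    decide
  rw [h1, h2]
  have h3 : (Finset.univ.filter fun v : Fin n => ¬ (v.val = n - 1) ∧ v.val % 2 = 0).card
      = ∑ i ∈ Finset.range n, if ¬ (i = n - 1) ∧ i % 2 = 0 then 1 else 0 := by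
    rw [Finset.card_filter]
    exact Fin.sum_univ_eq_sum_range (fun i => if ¬ (i = n - 1) ∧ i % 2 = 0 then 1 else 0) n
  have h4 : (∑ i ∈ Finset.range n, if ¬ (i = n - 1) ∧ i % 2 = 0 then 1 else 0)
      = ∑ i ∈ Finset.range (n - 1), if i % 2 = 0 then 1 else 0 := by
    have hsplit : n = (n - 1) + 1 := by omega
    rw [hsplit, Finset.sum_range_succ]
    have hlast : ¬ (¬ (n - 1 + 1 - 1 = n - 1) ∧ (n - 1 + 1 - 1) % 2 = 0) := by
      simp
    rw [if_neg (by simpa using hlast)]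
    rw [add_zero]
    apply Finset.sum_congr rfl
    intro i hi
    rw [Finset.mem_range] at hi
    have : ¬ (i = n - 1 + 1 - 1) := by omega
    simp only [this, not_false_iff, true_and]
  rw [h3, h4, sum_even_ind]
  have h0 : oddCol n none = (0 : Fin 4) := rfl
  rw [h0, if_neg (by decide : ¬ (0 : Fin 4) = 1)]
  simp
  omega

lemma theta_oddCol2 {n : ℕ} (hn : 3 ≤ n) (ho : n % 2 = 1) : theta (oddCol n) 2 = (n - 1) / 2 := by
  rw [theta_parts]
  have h1 : (Finset.univ.filter fun v : Fin n => oddCol n (some (v, false)) = 2)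
      = (Finset.univ.filter fun v : Fin n => ¬ (v.val = n - 1) ∧ ¬ (v.val % 2 = 0)) := by
    apply Finset.filter_congr
    intro v _
    show (if v.val = n - 1 then (3 : Fin 4) else if v.val % 2 = 0 then 1 else 2) = 2 ↔ _
    split_ifs <;> simp_all
  have h2 : (Finset.univ.filter fun v : Fin n => oddCol n (some (v, true)) = 2) = ∅ := by
    rw [Finset.filter_eq_empty_iff]
    intro v _
    show ¬ (0 : Fin 4) = 2
    decide
  rw [h1, h2]
  have h3 : (Finset.univ.filter fun v : Fin n => ¬ (v.val = n - 1) ∧ ¬ (v.val % 2 = 0)).card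
      = ∑ i ∈ Finset.range n, if ¬ (i = n - 1) ∧ ¬ (i % 2 = 0) then 1 else 0 := by
    rw [Finset.card_filter]
    exact Fin.sum_univ_eq_sum_range (fun i => if ¬ (i = n - 1) ∧ ¬ (i % 2 = 0) then 1 else 0) n
  have h4 : (∑ i ∈ Finset.range n, if ¬ (i = n - 1) ∧ ¬ (i % 2 = 0) then 1 else 0)
      = ∑ i ∈ Finset.range (n - 1), if i % 2 = 0 then 0 else 1 := by
    have hsplit : n = (n - 1) + 1 := by omega
    rw [hsplit, Finset.sum_range_succ]
    rw [if_neg (by simp)]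
    rw [add_zero]
    apply Finset.sum_congr rfl
    intro i hi
    rw [Finset.mem_range] at hi
    have hne : ¬ (i = n - 1 + 1 - 1) := by omega
    simp only [hne, not_false_iff, true_and]
    by_cases h : i % 2 = 0 <;> simp [h]
  rw [h3, h4, sum_odd_ind]
  have h0 : oddCol n none = (0 : Fin 4) := rfl
  rw [h0, if_neg (by decide : ¬ (0 : Fin 4) = 2)]
  simp

lemma theta_oddCol3 {n : ℕ} (hn : 3 ≤ n) : theta (oddCol n) 3 = 1 := by
  rw [theta_parts]
  have h1 : (Finset.univ.filter fun v : Fin n => oddCol n (some (v, false)) = 3)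
      = (Finset.univ.filter fun v : Fin n => v.val = n - 1) := by
    apply Finset.filter_congr
    intro v _
    show (if v.val = n - 1 then (3 : Fin 4) else if v.val % 2 = 0 then 1 else 2) = 3 ↔ _
    split_ifs <;> simp_all
  have h2 : (Finset.univ.filter fun v : Fin n => oddCol n (some (v, true)) = 3) = ∅ := by
    rw [Finset.filter_eq_empty_iff]
    intro v _
    show ¬ (0 : Fin 4) = 3
    decide
  rw [h1, h2]
  have h3 : (Finset.univ.filter fun v : Fin n => v.val = n - 1).card
      = ∑ i ∈ Finset.range n, if i = n - 1 then 1 else 0 := by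
    rw [Finset.card_filter]
    exact Fin.sum_univ_eq_sum_range (fun i => if i = n - 1 then 1 else 0) n
  have h4 : (∑ i ∈ Finset.range n, if i = n - 1 then 1 else 0) = 1 := by
    have hsplit : n = (n - 1) + 1 := by omega
    rw [hsplit, Finset.sum_range_succ]
    have hz : (∑ i ∈ Finset.range (n - 1), if i = n - 1 + 1 - 1 then 1 else 0) = 0 := by
      apply Finset.sum_eq_zero
      intro i hi
      rw [Finset.mem_range] at hi
      rw [if_neg (by omega)]
    rw [hz, if_pos (show n - 1 = n - 1 + 1 - 1 by omega)]
  rw [h3, h4]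
  have h0 : oddCol n none = (0 : Fin 4) := rfl
  rw [h0, if_neg (by decide : ¬ (0 : Fin 4) = 3)]
  simp

lemma ofFn3 (f : Fin 3 → ℕ) : List.ofFn f = [f 0, f 1, f 2] := by
  simp [List.ofFn_succ]

lemma ofFn4 (f : Fin 4 → ℕ) : List.ofFn f = [f 0, f 1, f 2, f 3] := by
  simp [List.ofFn_succ]

lemma desc_evenCol {n : ℕ} (hn : 3 ≤ n) (he : n % 2 = 0) :
    classSizesDesc (evenCol n) = [n + 1, n / 2, n / 2] := by
  apply classSizesDesc_eq_of_perm
  · rw [ofFn3, theta_evenCol0 hn, theta_evenCol1 hn he, theta_evenCol2 hn]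
  · refine List.Pairwise.cons ?_ (List.Pairwise.cons ?_ (List.pairwise_singleton _ _)) <;> simp <;> omega

lemma desc_oddCol {n : ℕ} (hn : 3 ≤ n) (ho : n % 2 = 1) :
    classSizesDesc (oddCol n) = [n + 1, (n - 1) / 2, (n - 1) / 2, 1] := by
  apply classSizesDesc_eq_of_perm
  · rw [ofFn4, theta_oddCol0 hn, theta_oddCol1 hn ho, theta_oddCol2 hn ho, theta_oddCol3 hn]
  · refine List.Pairwise.cons ?_ (List.Pairwise.cons ?_ (List.Pairwise.cons ?_ (List.pairwise_singleton _ _))) <;> simp <;> omega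

lemma even_main {n : ℕ} (hn : 3 ≤ n) (he : n % 2 = 0) {k : ℕ} (hk : k = 3)
    (C : Option (Fin n × Bool) → Fin k)
    (h1 : IsProperColoring (sunflowerG n) C)
    (h2 : ∀ C' : Option (Fin n × Bool) → Fin k, IsProperColoring (sunflowerG n) C' →
      ¬ List.Lex (· < ·) (classSizesDesc C) (classSizesDesc C')) :
    ∏ i, theta C i = (n + 1) * n ^ 2 / 4 := by
  subst hk
  have hlex := h2 (evenCol n) (evenCol_proper hn he)
  rw [desc_evenCol hn he] at hlex
  obtain ⟨a, b, c, hL⟩ := List.length_eq_three.mp (classSizesDesc_length C)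
  have hsum : a + b + c = 2 * n + 1 := by
    have hs := classSizesDesc_sum C
    rw [hL] at hs
    simp [Fintype.card_option, Fintype.card_prod] at hs
    omega
  rw [hL] at hlex
  obtain ⟨ia, hia⟩ := classSizesDesc_mem C (show a ∈ classSizesDesc C by rw [hL]; simp)
  have ha_le : a ≤ n + 1 := hia ▸ theta_le hn h1 ia
  have ha_ge : ¬ a < n + 1 := fun h => hlex (List.Lex.rel h)
  have ha : a = n + 1 := by omega
  have hfull : theta C ia = n + 1 := by rw [hia, ha]
  subst ha
  obtain ⟨ib, hib⟩ := classSizesDesc_mem C (show b ∈ classSizesDesc C by rw [hL]; simp)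
  have hb_le : b ≤ n / 2 := by
    by_cases hne : ib = ia
    · exfalso
      rw [hne, hfull] at hib
      omega
    · exact hib ▸ theta_other hn h1 hfull hne
  have hb_ge : ¬ b < n / 2 := fun h => hlex (List.Lex.cons (List.Lex.rel h))
  have hb : b = n / 2 := by omega
  subst hb
  have hc : c = n / 2 := by omega
  subst hc
  have hprod : ∏ i, theta C i = (n + 1) * (n / 2 * (n / 2 * 1)) := by
    rw [← classSizesDesc_prod, hL]
    simp
  rw [hprod]
  obtain ⟨m, hm⟩ : ∃ m, n = 2 * m := ⟨n / 2, by omega⟩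
  subst hm
  have h2m : 2 * m / 2 = m := by omega
  rw [h2m]
  have hr : (2 * m + 1) * (2 * m) ^ 2 = ((2 * m + 1) * (m * (m * 1))) * 4 := by ring
  rw [hr, Nat.mul_div_cancel _ (by norm_num)]

lemma list_len4 {l : List ℕ} (h : l.length = 4) : ∃ a b c d, l = [a, b, c, d] := by
  obtain ⟨a, t1, rfl⟩ := List.exists_of_length_succ _ h
  simp at h
  obtain ⟨b, t2, rfl⟩ := List.exists_of_length_succ _ h
  simp at h
  obtain ⟨c, t3, rfl⟩ := List.exists_of_length_succ _ h
  simp at h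
  obtain ⟨d, t4, rfl⟩ := List.exists_of_length_succ _ h
  simp at h
  exact ⟨a, b, c, d, by rw [h]⟩

lemma odd_main {n : ℕ} (hn : 3 ≤ n) (ho : n % 2 = 1) {k : ℕ} (hk : k = 4)
    (C : Option (Fin n × Bool) → Fin k)
    (h1 : IsProperColoring (sunflowerG n) C)
    (h2 : ∀ C' : Option (Fin n × Bool) → Fin k, IsProperColoring (sunflowerG n) C' →
      ¬ List.Lex (· < ·) (classSizesDesc C) (classSizesDesc C')) :
    ∏ i, theta C i = (n + 1) * (n - 1) ^ 2 / 4 := by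
  subst hk
  have hlex := h2 (oddCol n) (oddCol_proper hn ho)
  rw [desc_oddCol hn ho] at hlex
  obtain ⟨a, b, c, d, hL⟩ := list_len4 (classSizesDesc_length C)
  have hsum : a + b + c + d = 2 * n + 1 := by
    have hs := classSizesDesc_sum C
    rw [hL] at hs
    simp [Fintype.card_option, Fintype.card_prod] at hs
    omega
  rw [hL] at hlex
  obtain ⟨ia, hia⟩ := classSizesDesc_mem C (show a ∈ classSizesDesc C by rw [hL]; simp)
  have ha_le : a ≤ n + 1 := hia ▸ theta_le hn h1 ia
  have ha_ge : ¬ a < n + 1 := fun h => hlex (List.Lex.rel h)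
  have ha : a = n + 1 := by omega
  have hfull : theta C ia = n + 1 := by rw [hia, ha]
  subst ha
  obtain ⟨ib, hib⟩ := classSizesDesc_mem C (show b ∈ classSizesDesc C by rw [hL]; simp)
  have hb_le : b ≤ n / 2 := by
    by_cases hne : ib = ia
    · exfalso
      rw [hne, hfull] at hib
      omega
    · exact hib ▸ theta_other hn h1 hfull hne
  have hb_ge : ¬ b < (n - 1) / 2 := fun h => hlex (List.Lex.cons (List.Lex.rel h))
  have hb : b = (n - 1) / 2 := by omega
  subst hb
  obtain ⟨ic, hic⟩ := classSizesDesc_mem C (show c ∈ classSizesDesc C by rw [hL]; simp)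
  have hc_le : c ≤ n / 2 := by
    by_cases hne : ic = ia
    · exfalso
      rw [hne, hfull] at hic
      omega
    · exact hic ▸ theta_other hn h1 hfull hne
  have hc_ge : ¬ c < (n - 1) / 2 := fun h =>
    hlex (List.Lex.cons (List.Lex.cons (List.Lex.rel h)))
  have hc : c = (n - 1) / 2 := by omega
  subst hc
  have hd : d = 1 := by omega
  subst hd
  have hprod : ∏ i, theta C i = (n + 1) * ((n - 1) / 2 * ((n - 1) / 2 * (1 * 1))) := by
    rw [← classSizesDesc_prod, hL]
    simp
  rw [hprod]
  obtain ⟨m, hm⟩ : ∃ m, n = 2 * m + 1 := ⟨n / 2, by omega⟩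
  subst hm
  have h2m : (2 * m + 1 - 1) / 2 = m := by omega
  rw [h2m]
  have he1 : 2 * m + 1 - 1 = 2 * m := by omega
  rw [he1]
  have hr : (2 * m + 1 + 1) * (2 * m) ^ 2 = ((2 * m + 1 + 1) * (m * (m * (1 * 1)))) * 4 := by ring
  rw [hr, Nat.mul_div_cancel _ (by norm_num)]


theorem sunflowerGraph_chromaticCompoundCurlingNumber (n : ℕ) (hn : 3 ≤ n)
    (C : Option (Fin n × Bool) → Fin (chi (sunflowerG n)))
    (hC : IsChiMinusColoring (sunflowerG n) C) :
    ∏ i, theta C i = if Even n then (n + 1) * n ^ 2 / 4 else (n + 1) * (n - 1) ^ 2 / 4 := by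
  obtain ⟨h1, h2⟩ := hC
  rcases Nat.even_or_odd n with he | ho
  · rw [if_pos he]
    exact even_main hn (Nat.even_iff.mp he) (chi_even hn (Nat.even_iff.mp he)) C h1 h2
  · rw [if_neg (by simpa using Nat.not_even_iff_odd.mpr ho)]
    exact odd_main hn (Nat.odd_iff.mp ho) (chi_odd hn (Nat.odd_iff.mp ho)) C h1 h2
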